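/- Let x ∈ ℝⁿ be partitioned into k disjoint sub-lists x₁,…,x_k with ground-truth sorted versions y*₁,…,y*_k. Suppose for each i, yᵢ is a monotone (sorted) list of the same length as xᵢ with ‖yᵢ − y*ᵢ‖∞ ≤ εᵢ. Then the merge of y₁,…,y_k (equivalently, the sort of their concatenation) satisfies ‖y − y*‖∞ ≤ max_i εᵢ, where y* is the sorted version of x. -/

import Mathlib

open List

private lemma countP_ge_sorted {s : List ℝ} (hs : s.Pairwise (· ≤ ·)) {j : ℕ} (hj : j < s.length) :
    j + 1 ≤ s.countP (fun y => decide (y ≤ s.get ⟨j, hj⟩)) := by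
  have h1 : (s.take (j+1)).countP (fun y => decide (y ≤ s.get ⟨j, hj⟩)) = (s.take (j+1)).length := by
    apply List.countP_eq_length.mpr
    intro a ha
    rw [List.mem_iff_get] at ha
    obtain ⟨m, rfl⟩ := ha
    simp only [decide_eq_true_eq]
    have hm : (m : ℕ) < j + 1 := by
      have := m.isLt
      simpa using this.trans_le (c := j + 1) (by simp [List.length_take])
    have : (s.take (j+1)).get m = s.get ⟨m, by omega⟩ := by
      simp [List.get_eq_getElem, List.getElem_take]
    rw [this]
    exact hs.rel_get_of_le (by simp; omega)
  have h2 : (s.take (j+1)).length = j + 1 := by simp [List.length_take]; omega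
  calc j + 1 = (s.take (j+1)).countP (fun y => decide (y ≤ s.get ⟨j, hj⟩)) := by rw [h1, h2]
    _ ≤ s.countP _ := (List.take_sublist _ _).countP_le

private lemma sorted_le_of_countP {s : List ℝ} (hs : s.Pairwise (· ≤ ·)) {j : ℕ} (hj : j < s.length)
    {t : ℝ} (h : j + 1 ≤ s.countP (fun y => decide (y ≤ t))) : s.get ⟨j, hj⟩ ≤ t := by
  by_contra hlt
  push_neg at hlt
  have hsplit : s.countP (fun y => decide (y ≤ t)) =
      (s.take j).countP (fun y => decide (y ≤ t)) + (s.drop j).countP (fun y => decide (y ≤ t)) := by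
    rw [← List.countP_append, List.take_append_drop]
  have hdrop : (s.drop j).countP (fun y => decide (y ≤ t)) = 0 := by
    apply List.countP_eq_zero.mpr
    intro a ha
    rw [List.mem_iff_get] at ha
    obtain ⟨m, rfl⟩ := ha
    have hm : (s.drop j).get m = s.get ⟨j + m, by have := m.isLt; simp [List.length_drop] at this; omega⟩ := by
      simp [List.get_eq_getElem, List.getElem_drop]
    simp only [decide_eq_true_eq, hm]
    push_neg
    exact lt_of_lt_of_le hlt (hs.rel_get_of_le (by simp))
  have htake : (s.take j).countP (fun y => decide (y ≤ t)) ≤ j := by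
    calc _ ≤ (s.take j).length := List.countP_le_length
      _ ≤ j := by simp [List.length_take]
  omega

private lemma countP_transfer {ε : ℝ} {a c : List ℝ}
    (h : Forall₂ (fun p q => p ≤ q + ε) a c) (t : ℝ) :
    c.countP (fun y => decide (y ≤ t)) ≤ a.countP (fun y => decide (y ≤ t + ε)) := by
  induction h with
  | nil => simp
  | @cons p q l₁ l₂ hpq _ ih =>
    simp only [List.countP_cons, decide_eq_true_eq]
    split_ifs with hq hp
    all_goals try omega
    exact absurd (by linarith : p ≤ t + ε) hp

private lemma sort_one_side {ε : ℝ} {a c : List ℝ}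
    (h : Forall₂ (fun p q => p ≤ q + ε) a c) {j : ℕ}
    (hja : j < (a.insertionSort (· ≤ ·)).length) (hjc : j < (c.insertionSort (· ≤ ·)).length) :
    (a.insertionSort (· ≤ ·)).get ⟨j, hja⟩ ≤ (c.insertionSort (· ≤ ·)).get ⟨j, hjc⟩ + ε := by
  refine sorted_le_of_countP (List.pairwise_insertionSort _ _) hja ?_
  calc j + 1 ≤ (c.insertionSort (· ≤ ·)).countP
        (fun y => decide (y ≤ (c.insertionSort (· ≤ ·)).get ⟨j, hjc⟩)) :=
        countP_ge_sorted (List.pairwise_insertionSort _ _) hjc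
    _ = c.countP _ := (List.perm_insertionSort _ _).countP_eq _
    _ ≤ a.countP _ := countP_transfer h _
    _ = _ := ((List.perm_insertionSort _ _).countP_eq _).symm

private lemma sort_linf {ε : ℝ} {a c : List ℝ}
    (h : Forall₂ (fun p q => |p - q| ≤ ε) a c) {j : ℕ}
    (hja : j < (a.insertionSort (· ≤ ·)).length) (hjc : j < (c.insertionSort (· ≤ ·)).length) :
    |(a.insertionSort (· ≤ ·)).get ⟨j, hja⟩ - (c.insertionSort (· ≤ ·)).get ⟨j, hjc⟩| ≤ ε := by
  have h1 : Forall₂ (fun p q => p ≤ q + ε) a c := h.imp (fun {p q} hx => by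
    rw [abs_sub_le_iff] at hx; exact by linarith [hx.1])
  have h2 : Forall₂ (fun p q => p ≤ q + ε) c a := h.flip.imp (fun {p q} hx => by
    rw [abs_sub_le_iff] at hx; exact by linarith [hx.2])
  rw [abs_sub_le_iff]
  constructor
  · linarith [sort_one_side h1 hja hjc]
  · linarith [sort_one_side h2 hjc hja]

/-- Merging (sorting the concatenation of) approximately sorted sub-lists yields a
list within `max_i εᵢ` of the sorted full list, in the ℓ∞ sense. -/
theorem merge_linf_error (k : ℕ) (hk : 0 < k) (x ys : Fin k → List ℝ) (ε : Fin k → ℝ)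
    (hsorted : ∀ i, (ys i).Pairwise (· ≤ ·))
    (hlen : ∀ i, (ys i).length = (x i).length)
    (herr : ∀ i, ∀ j < (ys i).length,
      |(ys i)[j]! - ((x i).insertionSort (· ≤ ·))[j]!| ≤ ε i) :
    ∀ j < ((List.ofFn ys).flatten.insertionSort (· ≤ ·)).length,
      |((List.ofFn ys).flatten.insertionSort (· ≤ ·))[j]! -
        ((List.ofFn x).flatten.insertionSort (· ≤ ·))[j]!| ≤
        Finset.univ.sup' ⟨⟨0, hk⟩, Finset.mem_univ _⟩ ε := by
  intro j hj
  set E := Finset.univ.sup' ⟨⟨0, hk⟩, Finset.mem_univ _⟩ ε with hE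
  set S : Fin k → List ℝ := fun i => (x i).insertionSort (· ≤ ·) with hS
  -- Forall₂ between each ys i and S i
  have hF1 : ∀ i, Forall₂ (fun p q => |p - q| ≤ E) (ys i) (S i) := by
    intro i
    apply List.forall₂_of_length_eq_of_get
    · simp [hS, List.length_insertionSort, hlen i]
    · intro m h1 h2
      have hb := herr i m h1
      rw [getElem!_pos (ys i) m h1, getElem!_pos ((x i).insertionSort (· ≤ ·)) m (by simpa [hS] using h2)] at hb
      refine le_trans ?_ (Finset.le_sup' ε (Finset.mem_univ i))
      simpa [List.get_eq_getElem, hS] using hb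
  have hF : Forall₂ (fun p q => |p - q| ≤ E) (List.ofFn ys).flatten (List.ofFn S).flatten := by
    apply List.rel_flatten
    apply List.forall₂_of_length_eq_of_get
    · simp
    · intro m h1 h2
      simp only [List.get_ofFn]
      exact hF1 _
  -- sort (join x) = sort (join S)
  have hperm : (List.ofFn S).flatten ~ (List.ofFn x).flatten := by
    apply List.Perm.flatten_congr
    apply List.forall₂_of_length_eq_of_get
    · simp
    · intro m h1 h2
      simp only [List.get_ofFn]
      exact List.perm_insertionSort _ _
  have hsorteq : ((List.ofFn x).flatten.insertionSort (· ≤ ·)) =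
      ((List.ofFn S).flatten.insertionSort (· ≤ ·)) := by
    apply List.Perm.eq_of_pairwise' (List.pairwise_insertionSort _ _) (List.pairwise_insertionSort _ _)
    exact ((List.perm_insertionSort _ _).trans hperm.symm).trans (List.perm_insertionSort _ _).symm
  rw [hsorteq]
  have hjc : j < (((List.ofFn S).flatten).insertionSort (· ≤ ·)).length := by
    have := hF.length_eq
    simpa [List.length_insertionSort, ← this] using hj
  rw [getElem!_pos ((List.ofFn ys).flatten.insertionSort (· ≤ ·)) j hj,
    getElem!_pos ((List.ofFn S).flatten.insertionSort (· ≤ ·)) j hjc]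
  exact sort_linf hF hj hjc
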